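/- arXiv:2205.09937 — 8 statements merged into one kernel-verified Lean document; each statement's English description precedes it below -/
import Mathlib

section
/- Let U be a uninorm with identity element e and (M, ∘) a monoid with identity element e_M. If U is disjunctive (i.e., U(0,1) = 1), then a fuzzy subset σ : M → [0,1] is a U-fuzzy submonoid of M if and only if σ(x) = 1 for all x ∈ M. -/
theorem apply_top_eq_top_of_bot_top {α : Type*} [PartialOrder α] [BoundedOrder α]
    {U : α → α → α} (hUmono : ∀ a₁ a₂ b₁ b₂ : α, a₁ ≤ a₂ → b₁ ≤ b₂ → U a₁ b₁ ≤ U a₂ b₂)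
    (hdisj : U ⊥ ⊤ = ⊤) (a : α) : U a ⊤ = ⊤ :=
  eq_top_iff.2 <| hdisj.symm.trans_le <| hUmono ⊥ a ⊤ ⊤ bot_le le_rfl

theorem disjunctive_uninorm_fuzzy_submonoid_iff_general
    {M : Type*} [Monoid M]
    (U : unitInterval → unitInterval → unitInterval)
    (hUmono : ∀ a₁ a₂ b₁ b₂ : unitInterval, a₁ ≤ a₂ → b₁ ≤ b₂ → U a₁ b₁ ≤ U a₂ b₂)
    (hdisj : U 0 1 = 1)
    (σ : M → unitInterval) :
    ((∀ x y : M, U (σ x) (σ y) ≤ σ (x * y)) ∧ σ (1 : M) = 1) ↔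
      ∀ x : M, σ x = 1 := by
  constructor
  · rintro ⟨hsub, hone⟩ x
    have hx := hsub x 1
    rw [hone, mul_one, show (1 : unitInterval) = ⊤ from rfl,
      apply_top_eq_top_of_bot_top hUmono hdisj] at hx
    exact top_le_iff.1 hx
  · intro h
    exact ⟨fun x y => h (x * y) ▸ le_top, h 1⟩

/-- If a uninorm `U` is disjunctive (`U 0 1 = 1`), then `σ` is a `U`-fuzzy
submonoid of a monoid `M` iff `σ ≡ 1`. -/
theorem disjunctive_uninorm_fuzzy_submonoid_iff
    {M : Type*} [Monoid M]
    (U : unitInterval → unitInterval → unitInterval)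
    (hUcomm : ∀ x y, U x y = U y x)
    (hUassoc : ∀ x y z, U (U x y) z = U x (U y z))
    (hUmono : ∀ a₁ a₂ b₁ b₂ : unitInterval, a₁ ≤ a₂ → b₁ ≤ b₂ → U a₁ b₁ ≤ U a₂ b₂)
    (e : unitInterval) (hUe : ∀ x, U x e = x)
    (hdisj : U 0 1 = 1)
    (σ : M → unitInterval) :
    ((∀ x y : M, U (σ x) (σ y) ≤ σ (x * y)) ∧ σ (1 : M) = 1) ↔
      ∀ x : M, σ x = 1 :=
  disjunctive_uninorm_fuzzy_submonoid_iff_general U hUmono hdisj σ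
end

section
/- Let F_M be the nullnorm with absorbing element k given by F_M(x,y) = k·S(x/k, y/k) if (x,y) ∈ [0,k]², F_M(x,y) = k + (1−k)·min((x−k)/(1−k), (y−k)/(1−k)) if (x,y) ∈ (k,1]², and F_M(x,y) = k otherwise, where S is any t-conorm. A fuzzy subset σ : [0,1] → [0,1] is an F_M-fuzzy submonoid of ([0,1], min) if and only if σ(1) = 1 and σ(x) ≥ k for all x ∈ [0,1]. -/
/-! Above the absorbing element `k` the nullnorm `F_M` is just `min`, and at `(k, k)` it equals
`k · S(1, 1) ≤ k`; since `σ (min x y)` is one of `σ x`, `σ y`, the submonoid inequality holds as soon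
as `σ ≥ k`. Conversely, testing the inequality with `y = 1`, where `σ 1 = 1 > k`, gives
`F_M(σ x, 1) ≤ σ x`, and `F_M(a, 1) = k` whenever `a ≤ k`. -/

/-- The nullnorm `F_M` with absorbing element `k`. -/
noncomputable def nullnormMin (k : ℝ) (S : ℝ → ℝ → ℝ) (x y : ℝ) : ℝ :=
  if x ≤ k ∧ y ≤ k then k * S (x / k) (y / k)
  else if k < x ∧ k < y then k + (1 - k) * min ((x - k) / (1 - k)) ((y - k) / (1 - k))
  else k

namespace nullnormMin

variable {k : ℝ} {S : ℝ → ℝ → ℝ} {x y : ℝ}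

theorem of_le_of_lt (hx : x ≤ k) (hy : k < y) : nullnormMin k S x y = k := by
  rw [nullnormMin, if_neg (fun h => hy.not_ge h.2), if_neg (fun h => hx.not_gt h.1)]

theorem of_lt_of_lt (hk : k < 1) (hx : k < x) (hy : k < y) : nullnormMin k S x y = min x y := by
  have hk' : 1 - k ≠ 0 := (sub_pos.2 hk).ne'
  rw [nullnormMin, if_neg (fun h => hx.not_ge h.1), if_pos ⟨hx, hy⟩,
    mul_min_of_nonneg _ _ (sub_pos.2 hk).le, mul_div_cancel₀ _ hk', mul_div_cancel₀ _ hk',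
    ← min_add_add_left]
  simp only [add_sub_cancel]

theorem self_eq (hk : 0 < k) : nullnormMin k S k k = k * S 1 1 := by
  rw [nullnormMin, if_pos ⟨le_rfl, le_rfl⟩, div_self hk.ne']

theorem le_min_of_le (hk0 : 0 < k) (hk1 : k < 1) (hS : S 1 1 ≤ 1) (hx : k ≤ x) (hy : k ≤ y) :
    nullnormMin k S x y ≤ min x y := by
  by_cases hlt : k < x ∧ k < y
  · exact (of_lt_of_lt hk1 hlt.1 hlt.2).le
  by_cases hle : x ≤ k ∧ y ≤ k
  · obtain rfl : x = k := le_antisymm hle.1 hx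
    obtain rfl : y = x := le_antisymm hle.2 hy
    rw [self_eq hk0, min_self]
    exact mul_le_of_le_one_right hk0.le hS
  · rw [nullnormMin, if_neg hle, if_neg hlt]
    exact le_min hx hy

theorem le_of_le_self (hk : k < 1) {a : ℝ} (h : nullnormMin k S a 1 ≤ a) : k ≤ a := by
  by_contra! ha
  rw [of_le_of_lt ha.le hk] at h
  exact h.not_gt ha

end nullnormMin

theorem min_apply_le_apply_min {α β : Type*} [LinearOrder α] [LinearOrder β] (σ : α → β) (x y : α) :
    min (σ x) (σ y) ≤ σ (min x y) := by
  rcases min_choice x y with h | h <;> rw [h]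
  exacts [min_le_left _ _, min_le_right _ _]

theorem FM_fuzzy_submonoid_of_min_iff_general
    (k : ℝ) (hk : k ∈ Set.Ioo (0:ℝ) 1)
    (S : ℝ → ℝ → ℝ)
    (hSmap : ∀ x ∈ Set.Icc (0:ℝ) 1, ∀ y ∈ Set.Icc (0:ℝ) 1, S x y ∈ Set.Icc (0:ℝ) 1)
    (FM : ℝ → ℝ → ℝ)
    (hFM : ∀ x y, FM x y =
      if x ≤ k ∧ y ≤ k then k * S (x / k) (y / k)
      else if k < x ∧ k < y then k + (1 - k) * min ((x - k) / (1 - k)) ((y - k) / (1 - k))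
      else k)
    (σ : ℝ → ℝ) :
    ((∀ x ∈ Set.Icc (0:ℝ) 1, ∀ y ∈ Set.Icc (0:ℝ) 1, FM (σ x) (σ y) ≤ σ (min x y)) ∧
        σ 1 = 1) ↔
      (σ 1 = 1 ∧ ∀ x ∈ Set.Icc (0:ℝ) 1, k ≤ σ x) := by
  obtain rfl : FM = nullnormMin k S := funext₂ hFM
  have hone : (1 : ℝ) ∈ Set.Icc (0 : ℝ) 1 := ⟨zero_le_one, le_rfl⟩
  constructor
  · rintro ⟨hsub, h1⟩
    refine ⟨h1, fun x hx => nullnormMin.le_of_le_self (S := S) hk.2 ?_⟩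
    simpa only [h1, min_eq_left hx.2] using hsub x hx 1 hone
  · rintro ⟨h1, hge⟩
    refine ⟨fun x hx y hy => ?_, h1⟩
    calc nullnormMin k S (σ x) (σ y) ≤ min (σ x) (σ y) :=
          nullnormMin.le_min_of_le hk.1 hk.2 (hSmap 1 hone 1 hone).2 (hge x hx) (hge y hy)
      _ ≤ σ (min x y) := min_apply_le_apply_min σ x y

/-- A fuzzy subset `σ` is an `F_M`-fuzzy submonoid of `([0,1], min)` iff
`σ 1 = 1` and `σ x ≥ k` for all `x ∈ [0,1]`, where `F_M` is the nullnorm with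
absorbing element `k` built from a t-conorm `S` on `[0,k]²` and `min` on `(k,1]²`. -/
theorem FM_fuzzy_submonoid_of_min_iff
    (k : ℝ) (hk : k ∈ Set.Ioo (0:ℝ) 1)
    (S : ℝ → ℝ → ℝ)
    (hSmap : ∀ x ∈ Set.Icc (0:ℝ) 1, ∀ y ∈ Set.Icc (0:ℝ) 1, S x y ∈ Set.Icc (0:ℝ) 1)
    (hScomm : ∀ x y, S x y = S y x)
    (hSassoc : ∀ x y z, S (S x y) z = S x (S y z))
    (hSmono : ∀ x₁ x₂ y₁ y₂ : ℝ, x₁ ≤ x₂ → y₁ ≤ y₂ → S x₁ y₁ ≤ S x₂ y₂)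
    (hS0 : ∀ x ∈ Set.Icc (0:ℝ) 1, S x 0 = x)
    (FM : ℝ → ℝ → ℝ)
    (hFM : ∀ x y, FM x y =
      if x ≤ k ∧ y ≤ k then k * S (x / k) (y / k)
      else if k < x ∧ k < y then k + (1 - k) * min ((x - k) / (1 - k)) ((y - k) / (1 - k))
      else k)
    (σ : ℝ → ℝ) (hσ : ∀ x ∈ Set.Icc (0:ℝ) 1, σ x ∈ Set.Icc (0:ℝ) 1) :
    ((∀ x ∈ Set.Icc (0:ℝ) 1, ∀ y ∈ Set.Icc (0:ℝ) 1, FM (σ x) (σ y) ≤ σ (min x y)) ∧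
        σ 1 = 1) ↔
      (σ 1 = 1 ∧ ∀ x ∈ Set.Icc (0:ℝ) 1, k ≤ σ x) :=
  FM_fuzzy_submonoid_of_min_iff_general k hk S hSmap FM hFM σ
end

section
/- Let F_M be the nullnorm with absorbing element k ∈ (0,1) given by F_M(x,y) = k·S(x/k, y/k) on [0,k]², F_M(x,y) = k + (1−k)·min((x−k)/(1−k),(y−k)/(1−k)) on (k,1]², and k otherwise, where S is a t-conorm. A fuzzy subset σ : [0,1] → [0,1] is an F_M-fuzzy submonoid of ([0,1], max) if and only if σ(0) = 1 and σ(x) ≥ k for all x ∈ [0,1]. -/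
section nullnormMin

variable {k a b : ℝ} {S : ℝ → ℝ → ℝ}

lemma nullnormMin_one_right_of_le (hk1 : k < 1) (ha : a ≤ k) : nullnormMin k S a 1 = k := by
  have hlow : ¬(a ≤ k ∧ 1 ≤ k) := fun h => hk1.not_ge h.2
  have hhigh : ¬(k < a ∧ k < 1) := fun h => ha.not_gt h.1
  rw [nullnormMin, if_neg hlow, if_neg hhigh]

lemma nullnormMin_le_min (hk0 : 0 < k) (hk1 : k < 1) (hS : S 1 1 ≤ 1) (ha : k ≤ a)
    (hb : k ≤ b) : nullnormMin k S a b ≤ min a b := by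
  unfold nullnormMin
  split_ifs with hlow hhigh
  · obtain rfl : a = k := le_antisymm hlow.1 ha
    obtain rfl : b = a := le_antisymm hlow.2 hb
    rw [div_self hk0.ne', min_self]
    exact mul_le_of_le_one_right hk0.le hS
  · have h1k : 0 < 1 - k := sub_pos.mpr hk1
    rw [min_div_div_right h1k.le, mul_div_cancel₀ _ h1k.ne', min_sub_sub_right, add_sub_cancel]
  · exact le_min ha hb

end nullnormMin

theorem FM_fuzzy_submonoid_of_max_iff_general
    (k : ℝ) (hk : k ∈ Set.Ioo (0:ℝ) 1)
    (S : ℝ → ℝ → ℝ)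
    (hSmap : ∀ x ∈ Set.Icc (0:ℝ) 1, ∀ y ∈ Set.Icc (0:ℝ) 1, S x y ∈ Set.Icc (0:ℝ) 1)
    (FM : ℝ → ℝ → ℝ)
    (hFM : ∀ x y, FM x y =
      if x ≤ k ∧ y ≤ k then k * S (x / k) (y / k)
      else if k < x ∧ k < y then k + (1 - k) * min ((x - k) / (1 - k)) ((y - k) / (1 - k))
      else k)
    (σ : ℝ → ℝ) :
    ((∀ x ∈ Set.Icc (0:ℝ) 1, ∀ y ∈ Set.Icc (0:ℝ) 1, FM (σ x) (σ y) ≤ σ (max x y)) ∧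
        σ 0 = 1) ↔
      (σ 0 = 1 ∧ ∀ x ∈ Set.Icc (0:ℝ) 1, k ≤ σ x) := by
  obtain ⟨hk0, hk1⟩ := hk
  obtain rfl : FM = nullnormMin k S := funext₂ hFM
  have hS11 : S 1 1 ≤ 1 := (hSmap 1 ⟨zero_le_one, le_rfl⟩ 1 ⟨zero_le_one, le_rfl⟩).2
  constructor
  · rintro ⟨hsub, h0⟩
    refine ⟨h0, fun x hx => ?_⟩
    by_contra! hlt
    -- `0` is the identity of `max`, so the submonoid inequality at `(x, 0)` reads `F_M (σ x) 1 ≤ σ x`.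
    have hx0 := hsub x hx 0 ⟨le_rfl, zero_le_one⟩
    rw [h0, max_eq_left hx.1, nullnormMin_one_right_of_le hk1 hlt.le] at hx0
    exact hlt.not_ge hx0
  · rintro ⟨h0, hge⟩
    refine ⟨fun x hx y hy => ?_, h0⟩
    calc nullnormMin k S (σ x) (σ y) ≤ min (σ x) (σ y) :=
          nullnormMin_le_min hk0 hk1 hS11 (hge x hx) (hge y hy)
      _ ≤ σ (max x y) := by rcases le_total x y with h | h <;> simp [h]

/-- A fuzzy subset `σ` is an `F_M`-fuzzy submonoid of `([0,1], max)` iff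
`σ 0 = 1` and `σ x ≥ k` for all `x ∈ [0,1]`, where `F_M` is the nullnorm with
absorbing element `k` built from a t-conorm `S` on `[0,k]²` and `min` on `(k,1]²`. -/
theorem FM_fuzzy_submonoid_of_max_iff
    (k : ℝ) (hk : k ∈ Set.Ioo (0:ℝ) 1)
    (S : ℝ → ℝ → ℝ)
    (hSmap : ∀ x ∈ Set.Icc (0:ℝ) 1, ∀ y ∈ Set.Icc (0:ℝ) 1, S x y ∈ Set.Icc (0:ℝ) 1)
    (hScomm : ∀ x y, S x y = S y x)
    (hSassoc : ∀ x y z, S (S x y) z = S x (S y z))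
    (hSmono : ∀ x₁ x₂ y₁ y₂ : ℝ, x₁ ≤ x₂ → y₁ ≤ y₂ → S x₁ y₁ ≤ S x₂ y₂)
    (hS0 : ∀ x ∈ Set.Icc (0:ℝ) 1, S x 0 = x)
    (FM : ℝ → ℝ → ℝ)
    (hFM : ∀ x y, FM x y =
      if x ≤ k ∧ y ≤ k then k * S (x / k) (y / k)
      else if k < x ∧ k < y then k + (1 - k) * min ((x - k) / (1 - k)) ((y - k) / (1 - k))
      else k)
    (σ : ℝ → ℝ) (hσ : ∀ x ∈ Set.Icc (0:ℝ) 1, σ x ∈ Set.Icc (0:ℝ) 1) :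
    ((∀ x ∈ Set.Icc (0:ℝ) 1, ∀ y ∈ Set.Icc (0:ℝ) 1, FM (σ x) (σ y) ≤ σ (max x y)) ∧
        σ 0 = 1) ↔
      (σ 0 = 1 ∧ ∀ x ∈ Set.Icc (0:ℝ) 1, k ≤ σ x) :=
  FM_fuzzy_submonoid_of_max_iff_general k hk S hSmap FM hFM σ
end

section
/- Let A be a binary aggregation operator, E an A-indistinguishability operator on M separating points, and (M, ∘̃) an A-vague monoid with respect to E. Then the identity element of (M, ∘̃) is unique: if e and e' both satisfy ∘̃(e,x,x) = ∘̃(x,e,x) = 1 and ∘̃(e',x,x) = ∘̃(x,e',x) = 1 for all x ∈ M, then e = e'. -/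
theorem eq_of_vague_op_eq_one {M : Type*} {A : unitInterval → unitInterval → unitInterval}
    (hA1 : A 1 1 = 1) {E : M → M → unitInterval} (hsep : ∀ x y, E x y = 1 → x = y)
    {o : M → M → M → unitInterval} (hcomp : ∀ x y z z', A (o x y z) (o x y z') ≤ E z z')
    {x y z z' : M} (hz : o x y z = 1) (hz' : o x y z' = 1) : z = z' := by
  have h := hcomp x y z z'
  rw [hz, hz', hA1] at h
  exact hsep z z' (le_antisymm unitInterval.le_one' h)

theorem vague_monoid_identity_unique_general
    {M : Type*}
    (A : unitInterval → unitInterval → unitInterval)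
    (hA1 : A 1 1 = 1)
    (E : M → M → unitInterval)
    (hsep : ∀ x y, E x y = 1 → x = y)
    (o : M → M → M → unitInterval)
    (hcomp : ∀ x y z z', A (o x y z) (o x y z') ≤ E z z') :
    ∀ e e' : M, (∀ x, o e x x = 1 ∧ o x e x = 1) →
      (∀ x, o e' x x = 1 ∧ o x e' x = 1) → e = e' := by
  intro e e' he he'
  -- `e ∘̃ e'` is `e'` to degree one because `e` is a left identity, and `e` because `e'` is a right one
  exact (eq_of_vague_op_eq_one hA1 hsep hcomp (he e').1 (he' e).2).symm

/-- In an `A`-vague monoid with respect to an `A`-indistinguishability operator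
separating points, the identity element is unique. -/
theorem vague_monoid_identity_unique
    {M : Type*}
    (A : unitInterval → unitInterval → unitInterval)
    (hA0 : A 0 0 = 0) (hA1 : A 1 1 = 1)
    (hAmono : ∀ a₁ a₂ b₁ b₂ : unitInterval, a₁ ≤ a₂ → b₁ ≤ b₂ → A a₁ b₁ ≤ A a₂ b₂)
    (E : M → M → unitInterval)
    (hErefl : ∀ x, E x x = 1) (hEsymm : ∀ x y, E x y = E y x)
    (hEtrans : ∀ x y z, A (E x y) (E y z) ≤ E x z)
    (hsep : ∀ x y, E x y = 1 → x = y)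
    (o : M → M → M → unitInterval)
    (hext : ∀ x y z x' y' z',
      A (o x y z) (A (E x x') (A (E y y') (E z z'))) ≤ o x' y' z')
    (hcomp : ∀ x y z z', A (o x y z) (o x y z') ≤ E z z')
    (hex : ∀ x y, ∃ z, o x y z = 1)
    (hassoc : ∀ x y z d m q w,
      A (o y z d) (A (o x d m) (A (o x y q) (o q z w))) ≤ E m w) :
    ∀ e e' : M, (∀ x, o e x x = 1 ∧ o x e x = 1) →
      (∀ x, o e' x x = 1 ∧ o x e' x = 1) → e = e' :=
  vague_monoid_identity_unique_general A hA1 E hsep o hcomp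
end

section
/- Let A be a binary aggregation operator that is associative and commutative, ∘ a binary operation on M, and E an A-indistinguishability operator on M that is regular with respect to ∘ (i.e., E(x,y) ≤ E(x∘z, y∘z) and E(x,y) ≤ E(z∘x, z∘y) for all x,y,z). Define ∘̃(x,y,z) = E(x∘y, z). Then ∘̃ is an A-vague binary operation on M; that is, (1) A(∘̃(x,y,z), A(E(x,x'), A(E(y,y'), E(z,z')))) ≤ ∘̃(x',y',z'); (2) A(∘̃(x,y,z), ∘̃(x,y,z')) ≤ E(z,z'); (3) for all x,y there exists z with ∘̃(x,y,z) = 1. -/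
/-! `E (x ∘ y) z` is the fuzzy graph of `∘`. Extensionality in the output variable is just
transitivity of `E`; extensionality in the input variables comes from regularity, which turns
`E x x'` and `E y y'` into `E (x ∘ y) (x' ∘ y)` and `E (x' ∘ y) (x' ∘ y')`, chained by transitivity.
Functionality is transitivity through the common point `x ∘ y`, and `z = x ∘ y` is a point of
degree `1` by reflexivity. -/

section

variable {α M : Type*} (A : α → α → α) (E : M → M → α)

theorem aggregate_rotate (hassoc : ∀ a b c, A (A a b) c = A a (A b c))
    (hcomm : ∀ a b, A a b = A b a) (a b c d : α) :
    A a (A b (A c d)) = A (A b c) (A a d) := by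
  rw [hassoc b c, ← hassoc c a d, hcomm c a, hassoc a c d, ← hassoc b a, hcomm b a, hassoc a b]

theorem aggregate_le_apply_of_regular [Preorder α]
    (hmono : ∀ a₁ a₂ b₁ b₂, a₁ ≤ a₂ → b₁ ≤ b₂ → A a₁ b₁ ≤ A a₂ b₂)
    (htrans : ∀ x y z, A (E x y) (E y z) ≤ E x z) (op : M → M → M)
    (hreg₁ : ∀ x y z, E x y ≤ E (op x z) (op y z))
    (hreg₂ : ∀ x y z, E x y ≤ E (op z x) (op z y)) (x x' y y' : M) :
    A (E x x') (E y y') ≤ E (op x y) (op x' y') :=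
  (hmono _ _ _ _ (hreg₁ x x' y) (hreg₂ y y' x')).trans (htrans _ _ _)

theorem aggregate_le_of_common_left [LE α] (hsymm : ∀ x y, E x y = E y x)
    (htrans : ∀ x y z, A (E x y) (E y z) ≤ E x z) (p z z' : M) :
    A (E p z) (E p z') ≤ E z z' := by
  simpa only [hsymm p z] using htrans z p z'

end

theorem regular_indistinguishability_gives_vague_operation_general
    {M : Type*}
    (A : unitInterval → unitInterval → unitInterval)
    (hAmono : ∀ a₁ a₂ b₁ b₂ : unitInterval, a₁ ≤ a₂ → b₁ ≤ b₂ → A a₁ b₁ ≤ A a₂ b₂)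
    (hAassoc : ∀ a b c, A (A a b) c = A a (A b c))
    (hAcomm : ∀ a b, A a b = A b a)
    (op : M → M → M)
    (E : M → M → unitInterval)
    (hErefl : ∀ x, E x x = 1) (hEsymm : ∀ x y, E x y = E y x)
    (hEtrans : ∀ x y z, A (E x y) (E y z) ≤ E x z)
    (hreg₁ : ∀ x y z, E x y ≤ E (op x z) (op y z))
    (hreg₂ : ∀ x y z, E x y ≤ E (op z x) (op z y))
    (o : M → M → M → unitInterval)
    (ho : ∀ x y z, o x y z = E (op x y) z) :
    (∀ x y z x' y' z',
        A (o x y z) (A (E x x') (A (E y y') (E z z'))) ≤ o x' y' z') ∧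
    (∀ x y z z', A (o x y z) (o x y z') ≤ E z z') ∧
    (∀ x y, ∃ z, o x y z = 1) := by
  refine ⟨fun x y z x' y' z' => ?_, fun x y z z' => ?_, fun x y => ⟨op x y, by rw [ho, hErefl]⟩⟩
  · have hinputs : A (E x x') (E y y') ≤ E (op x' y') (op x y) := by
      rw [hEsymm (op x' y')]
      exact aggregate_le_apply_of_regular A E hAmono hEtrans op hreg₁ hreg₂ x x' y y'
    calc A (o x y z) (A (E x x') (A (E y y') (E z z')))
        = A (A (E x x') (E y y')) (A (E (op x y) z) (E z z')) := by
          rw [ho, aggregate_rotate A hAassoc hAcomm]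
      _ ≤ A (E (op x' y') (op x y)) (E (op x y) z') := hAmono _ _ _ _ hinputs (hEtrans _ _ _)
      _ ≤ o x' y' z' := (hEtrans _ _ _).trans_eq (ho _ _ _).symm
  · rw [ho, ho]
    exact aggregate_le_of_common_left A E hEsymm hEtrans _ _ _

/-- If `E` is a regular `A`-indistinguishability operator with respect to a binary
operation `∘` on `M`, then `o x y z := E (x ∘ y) z` is an `A`-vague binary
operation on `M`. -/
theorem regular_indistinguishability_gives_vague_operation
    {M : Type*}
    (A : unitInterval → unitInterval → unitInterval)
    (hA0 : A 0 0 = 0) (hA1 : A 1 1 = 1)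
    (hAmono : ∀ a₁ a₂ b₁ b₂ : unitInterval, a₁ ≤ a₂ → b₁ ≤ b₂ → A a₁ b₁ ≤ A a₂ b₂)
    (hAassoc : ∀ a b c, A (A a b) c = A a (A b c))
    (hAcomm : ∀ a b, A a b = A b a)
    (op : M → M → M)
    (E : M → M → unitInterval)
    (hErefl : ∀ x, E x x = 1) (hEsymm : ∀ x y, E x y = E y x)
    (hEtrans : ∀ x y z, A (E x y) (E y z) ≤ E x z)
    (hreg₁ : ∀ x y z, E x y ≤ E (op x z) (op y z))
    (hreg₂ : ∀ x y z, E x y ≤ E (op z x) (op z y))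
    (o : M → M → M → unitInterval)
    (ho : ∀ x y z, o x y z = E (op x y) z) :
    (∀ x y z x' y' z',
        A (o x y z) (A (E x x') (A (E y y') (E z z'))) ≤ o x' y' z') ∧
    (∀ x y z z', A (o x y z) (o x y z') ≤ E z z') ∧
    (∀ x y, ∃ z, o x y z = 1) :=
  regular_indistinguishability_gives_vague_operation_general A hAmono hAassoc hAcomm op E hErefl
    hEsymm hEtrans hreg₁ hreg₂ o ho
end

section
/- Let A be an associative, commutative aggregation operator, (M, ∘) a monoid, and E a regular A-indistinguishability operator on M with respect to ∘. Define ∘̃(x,y,z) = E(x∘y, z). Then (M, ∘̃) satisfies the vague associativity law: A(∘̃(y,z,d), A(∘̃(x,d,m), A(∘̃(x,y,q), ∘̃(q,z,w)))) ≤ E(m,w) for all x,y,z,d,m,q,w ∈ M, and the monoid identity e satisfies ∘̃(e,x,x) = ∘̃(x,e,x) = 1 for all x. -/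
/-!
Put `X = x * (y * z)`. Regularity moves each hypothesis onto a statement about `X`:
`E (y * z) d ≤ E X (x * d)` by left translation and `E (x * y) q ≤ E X (q * z)` by right
translation. Two transitivity steps then give `E X m` and `E X w`, and one more, through the
common point `X`, gives `E m w`.
-/

section Indistinguishability

variable {α : Type*} (A : unitInterval → unitInterval → unitInterval) (E : α → α → unitInterval)

lemma indist_of_common_point (hEsymm : ∀ x y, E x y = E y x)
    (hEtrans : ∀ x y z, A (E x y) (E y z) ≤ E x z) (p m w : α) :
    A (E p m) (E p w) ≤ E m w := by
  rw [hEsymm p m]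
  exact hEtrans m p w

lemma indist_of_two_paths_from
    (hAmono : ∀ a₁ a₂ b₁ b₂ : unitInterval, a₁ ≤ a₂ → b₁ ≤ b₂ → A a₁ b₁ ≤ A a₂ b₂)
    (hAassoc : ∀ a b c, A (A a b) c = A a (A b c))
    (hEsymm : ∀ x y, E x y = E y x) (hEtrans : ∀ x y z, A (E x y) (E y z) ≤ E x z)
    (p b c m w : α) :
    A (E p b) (A (E b m) (A (E p c) (E c w))) ≤ E m w :=
  calc A (E p b) (A (E b m) (A (E p c) (E c w)))
      ≤ A (E p b) (A (E b m) (E p w)) :=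
        hAmono _ _ _ _ le_rfl (hAmono _ _ _ _ le_rfl (hEtrans p c w))
    _ = A (A (E p b) (E b m)) (E p w) := (hAassoc _ _ _).symm
    _ ≤ A (E p m) (E p w) := hAmono _ _ _ _ (hEtrans p b m) le_rfl
    _ ≤ E m w := indist_of_common_point A E hEsymm hEtrans p m w

end Indistinguishability

theorem regular_indistinguishability_gives_vague_monoid_general
    {M : Type*} [Monoid M]
    (A : unitInterval → unitInterval → unitInterval)
    (hAmono : ∀ a₁ a₂ b₁ b₂ : unitInterval, a₁ ≤ a₂ → b₁ ≤ b₂ → A a₁ b₁ ≤ A a₂ b₂)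
    (hAassoc : ∀ a b c, A (A a b) c = A a (A b c))
    (E : M → M → unitInterval)
    (hErefl : ∀ x, E x x = 1) (hEsymm : ∀ x y, E x y = E y x)
    (hEtrans : ∀ x y z, A (E x y) (E y z) ≤ E x z)
    (hreg₁ : ∀ x y z : M, E x y ≤ E (x * z) (y * z))
    (hreg₂ : ∀ x y z : M, E x y ≤ E (z * x) (z * y))
    (o : M → M → M → unitInterval)
    (ho : ∀ x y z, o x y z = E (x * y) z) :
    (∀ x y z d m q w : M,
        A (o y z d) (A (o x d m) (A (o x y q) (o q z w))) ≤ E m w) ∧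
    (∀ x : M, o 1 x x = 1 ∧ o x 1 x = 1) := by
  refine ⟨fun x y z d m q w => ?_,
    fun x => ⟨by rw [ho, one_mul, hErefl], by rw [ho, mul_one, hErefl]⟩⟩
  simp only [ho]
  have hleft : E (y * z) d ≤ E (x * (y * z)) (x * d) := hreg₂ _ _ x
  have hright : E (x * y) q ≤ E (x * (y * z)) (q * z) := mul_assoc x y z ▸ hreg₁ _ _ z
  calc A (E (y * z) d) (A (E (x * d) m) (A (E (x * y) q) (E (q * z) w)))
      ≤ A (E (x * (y * z)) (x * d))
          (A (E (x * d) m) (A (E (x * (y * z)) (q * z)) (E (q * z) w))) :=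
        hAmono _ _ _ _ hleft (hAmono _ _ _ _ le_rfl (hAmono _ _ _ _ hright le_rfl))
    _ ≤ E m w := indist_of_two_paths_from A E hAmono hAassoc hEsymm hEtrans _ _ _ m w

/-- If `(M, ∘)` is a monoid and `E` is a regular `A`-indistinguishability
operator, then `o x y z := E (x * y) z` makes `(M, o)` an `A`-vague monoid:
the vague associativity law holds and the monoid identity is an identity for `o`. -/
theorem regular_indistinguishability_gives_vague_monoid
    {M : Type*} [Monoid M]
    (A : unitInterval → unitInterval → unitInterval)
    (hA0 : A 0 0 = 0) (hA1 : A 1 1 = 1)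
    (hAmono : ∀ a₁ a₂ b₁ b₂ : unitInterval, a₁ ≤ a₂ → b₁ ≤ b₂ → A a₁ b₁ ≤ A a₂ b₂)
    (hAassoc : ∀ a b c, A (A a b) c = A a (A b c))
    (hAcomm : ∀ a b, A a b = A b a)
    (E : M → M → unitInterval)
    (hErefl : ∀ x, E x x = 1) (hEsymm : ∀ x y, E x y = E y x)
    (hEtrans : ∀ x y z, A (E x y) (E y z) ≤ E x z)
    (hreg₁ : ∀ x y z : M, E x y ≤ E (x * z) (y * z))
    (hreg₂ : ∀ x y z : M, E x y ≤ E (z * x) (z * y))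
    (o : M → M → M → unitInterval)
    (ho : ∀ x y z, o x y z = E (x * y) z) :
    (∀ x y z d m q w : M,
        A (o y z d) (A (o x d m) (A (o x y q) (o q z w))) ≤ E m w) ∧
    (∀ x : M, o 1 x x = 1 ∧ o x 1 x = 1) :=
  regular_indistinguishability_gives_vague_monoid_general A hAmono hAassoc E hErefl hEsymm hEtrans
    hreg₁ hreg₂ o ho
end

section
/- Let E be an A-indistinguishability operator on M separating points and (M, ∘̃) an A-vague monoid with associated monoid (M, ∘) (where x∘y is the unique z with ∘̃(x,y,z)=1, assuming ∘̃(x,y,z)=E(x∘y,z) with E regular). Then (M, ∘̃) is commutative (i.e., A(∘̃(x,y,m), ∘̃(y,x,w)) ≤ E(m,w) for all x,y,m,w) if and only if (M, ∘) is commutative. -/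
section Indistinguishability

variable {α : Type*} (A : unitInterval → unitInterval → unitInterval) (E : α → α → unitInterval)

theorem eq_of_forall_A_le_indist (hA1 : A 1 1 = 1) (hErefl : ∀ x, E x x = 1)
    (hsep : ∀ x y, E x y = 1 → x = y) {a b : α}
    (h : ∀ m w, A (E a m) (E b w) ≤ E m w) : a = b := by
  apply hsep
  have hab := h a b
  rw [hErefl, hErefl, hA1] at hab
  exact le_antisymm le_top hab

theorem A_indist_le_indist_of_common (hEsymm : ∀ x y, E x y = E y x)
    (hEtrans : ∀ x y z, A (E x y) (E y z) ≤ E x z) (c m w : α) :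
    A (E c m) (E c w) ≤ E m w :=
  hEsymm c m ▸ hEtrans m c w

end Indistinguishability

theorem vague_monoid_commutative_iff_general
    {M : Type*} [Monoid M]
    (A : unitInterval → unitInterval → unitInterval)
    (hA1 : A 1 1 = 1)
    (E : M → M → unitInterval)
    (hErefl : ∀ x, E x x = 1) (hEsymm : ∀ x y, E x y = E y x)
    (hEtrans : ∀ x y z, A (E x y) (E y z) ≤ E x z)
    (hsep : ∀ x y, E x y = 1 → x = y)
    (o : M → M → M → unitInterval)
    (ho : ∀ x y z, o x y z = E (x * y) z) :
    (∀ x y m w : M, A (o x y m) (o y x w) ≤ E m w) ↔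
      (∀ x y : M, x * y = y * x) := by
  simp only [ho]
  constructor
  · intro h x y
    exact eq_of_forall_A_le_indist A E hA1 hErefl hsep (h x y)
  · intro h x y m w
    rw [h y x]
    exact A_indist_le_indist_of_common A E hEsymm hEtrans (x * y) m w

/-- The `A`-vague monoid `(M, o)` with `o x y z = E (x * y) z` is commutative iff
the associated monoid `(M, *)` is commutative. -/
theorem vague_monoid_commutative_iff
    {M : Type*} [Monoid M]
    (A : unitInterval → unitInterval → unitInterval)
    (hA0 : A 0 0 = 0) (hA1 : A 1 1 = 1)
    (hAmono : ∀ a₁ a₂ b₁ b₂ : unitInterval, a₁ ≤ a₂ → b₁ ≤ b₂ → A a₁ b₁ ≤ A a₂ b₂)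
    (hAassoc : ∀ a b c, A (A a b) c = A a (A b c))
    (hAcomm : ∀ a b, A a b = A b a)
    (E : M → M → unitInterval)
    (hErefl : ∀ x, E x x = 1) (hEsymm : ∀ x y, E x y = E y x)
    (hEtrans : ∀ x y z, A (E x y) (E y z) ≤ E x z)
    (hsep : ∀ x y, E x y = 1 → x = y)
    (hreg₁ : ∀ x y z : M, E x y ≤ E (x * z) (y * z))
    (hreg₂ : ∀ x y z : M, E x y ≤ E (z * x) (z * y))
    (o : M → M → M → unitInterval)
    (ho : ∀ x y z, o x y z = E (x * y) z) :
    (∀ x y m w : M, A (o x y m) (o y x w) ≤ E m w) ↔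
      (∀ x y : M, x * y = y * x) :=
  vague_monoid_commutative_iff_general A hA1 E hErefl hEsymm hEtrans hsep o ho
end

section
/- Let A be an associative commutative aggregation operator, (M, ∘) a monoid with identity e, and E a regular A-indistinguishability operator on M with respect to ∘. Then the fuzzy subset σ : M → [0,1] defined by σ(x) = E(x, e) is an A-fuzzy submonoid of (M, ∘); that is, σ(e) = 1 and A(σ(x), σ(y)) ≤ σ(x ∘ y) for all x, y ∈ M. -/
theorem indist_one_le_mul_right {M : Type*} [MulOneClass M] {E : M → M → unitInterval}
    (hreg₁ : ∀ x y z : M, E x y ≤ E (x * z) (y * z)) (x y : M) :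
    E x 1 ≤ E (x * y) y := by
  simpa only [one_mul] using hreg₁ x 1 y

theorem aggregate_indist_one_le_mul {M : Type*} [MulOneClass M]
    {A : unitInterval → unitInterval → unitInterval} {E : M → M → unitInterval}
    (hAmono_left : ∀ a₁ a₂ b : unitInterval, a₁ ≤ a₂ → A a₁ b ≤ A a₂ b)
    (hEtrans : ∀ x y z, A (E x y) (E y z) ≤ E x z)
    (hreg₁ : ∀ x y z : M, E x y ≤ E (x * z) (y * z)) (x y : M) :
    A (E x 1) (E y 1) ≤ E (x * y) 1 :=
  calc A (E x 1) (E y 1) ≤ A (E (x * y) y) (E y 1) :=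
        hAmono_left _ _ _ (indist_one_le_mul_right hreg₁ x y)
    _ ≤ E (x * y) 1 := hEtrans _ _ _

theorem kernel_of_id_is_fuzzy_submonoid_general
    {M : Type*} [Monoid M]
    (A : unitInterval → unitInterval → unitInterval)
    (hAmono : ∀ a₁ a₂ b₁ b₂ : unitInterval, a₁ ≤ a₂ → b₁ ≤ b₂ → A a₁ b₁ ≤ A a₂ b₂)
    (E : M → M → unitInterval)
    (hErefl : ∀ x, E x x = 1)
    (hEtrans : ∀ x y z, A (E x y) (E y z) ≤ E x z)
    (hreg₁ : ∀ x y z : M, E x y ≤ E (x * z) (y * z))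
    (σ : M → unitInterval)
    (hσ : ∀ x, σ x = E x 1) :
    σ (1 : M) = 1 ∧ ∀ x y : M, A (σ x) (σ y) ≤ σ (x * y) := by
  refine ⟨by rw [hσ, hErefl], fun x y => ?_⟩
  simpa only [hσ] using
    aggregate_indist_one_le_mul (fun a₁ a₂ b h => hAmono a₁ a₂ b b h le_rfl) hEtrans hreg₁ x y

/-- The kernel `σ x = E x 1` of the identity map on an `A`-vague monoid coming
from a regular `A`-indistinguishability operator `E` on a monoid `M` is an
`A`-fuzzy submonoid of `M`. -/
theorem kernel_of_id_is_fuzzy_submonoid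
    {M : Type*} [Monoid M]
    (A : unitInterval → unitInterval → unitInterval)
    (hA0 : A 0 0 = 0) (hA1 : A 1 1 = 1)
    (hAmono : ∀ a₁ a₂ b₁ b₂ : unitInterval, a₁ ≤ a₂ → b₁ ≤ b₂ → A a₁ b₁ ≤ A a₂ b₂)
    (hAassoc : ∀ a b c, A (A a b) c = A a (A b c))
    (hAcomm : ∀ a b, A a b = A b a)
    (E : M → M → unitInterval)
    (hErefl : ∀ x, E x x = 1) (hEsymm : ∀ x y, E x y = E y x)
    (hEtrans : ∀ x y z, A (E x y) (E y z) ≤ E x z)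
    (hreg₁ : ∀ x y z : M, E x y ≤ E (x * z) (y * z))
    (hreg₂ : ∀ x y z : M, E x y ≤ E (z * x) (z * y))
    (σ : M → unitInterval)
    (hσ : ∀ x, σ x = E x 1) :
    σ (1 : M) = 1 ∧ ∀ x y : M, A (σ x) (σ y) ≤ σ (x * y) :=
  kernel_of_id_is_fuzzy_submonoid_general A hAmono E hErefl hEtrans hreg₁ σ hσ
end
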